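/- arXiv:1512.04180 — 11 statements merged into one kernel-verified Lean document; each statement's English description precedes it below -/
import Mathlib

section
/- Let σ : 2^V → ℝ be a submodular (not necessarily monotone) set function on a finite set V. Then for every pair of subsets S, X ⊆ V, σ(X) ≤ σ(S) − Σ_{j ∈ S \ X} ρ_j(V \ {j}) + Σ_{j ∈ X \ S} ρ_j(S), where ρ_j(V \ {j}) = σ(V) − σ(V \ {j}). (Validity of the submodular optimality inequality for nonmonotone submodular value functions.) -/
open Finset

private lemma key_marg {V : Type*} [Fintype V] [DecidableEq V]
    (σ : Finset V → ℝ)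
    (hsub : ∀ A B : Finset V, σ (A ∪ B) + σ (A ∩ B) ≤ σ A + σ B)
    {A B : Finset V} (hAB : A ⊆ B) {a : V} (ha : a ∉ B) :
    σ (insert a B) - σ B ≤ σ (insert a A) - σ A := by
  have h := hsub (insert a A) B
  have h1 : insert a A ∪ B = insert a B := by
    rw [Finset.insert_union, Finset.union_eq_right.mpr hAB]
  have h2 : insert a A ∩ B = A := by
    rw [Finset.insert_inter_of_notMem ha, Finset.inter_eq_left.mpr hAB]
  rw [h1, h2] at h
  linarith

private lemma lemA {V : Type*} [Fintype V] [DecidableEq V]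
    (σ : Finset V → ℝ)
    (hsub : ∀ A B : Finset V, σ (A ∪ B) + σ (A ∩ B) ≤ σ A + σ B)
    (S : Finset V) :
    ∀ T : Finset V, Disjoint T S →
      σ (S ∪ T) ≤ σ S + ∑ j ∈ T, (σ (insert j S) - σ S) := by
  intro T
  induction T using Finset.induction_on with
  | empty => simp
  | @insert a T ha ih =>
    intro hd
    have hd' : Disjoint T S := (Finset.disjoint_insert_left.mp hd).2
    have haS : a ∉ S := (Finset.disjoint_insert_left.mp hd).1
    have haST : a ∉ S ∪ T := by simp [haS, ha]
    have h1 : S ∪ insert a T = insert a (S ∪ T) := by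
      ext x; simp [or_comm, or_left_comm]
    have h2 := key_marg σ hsub (Finset.subset_union_left (s₁ := S) (s₂ := T)) haST
    rw [h1, Finset.sum_insert ha]
    have := ih hd'
    linarith

private lemma lemB {V : Type*} [Fintype V] [DecidableEq V]
    (σ : Finset V → ℝ)
    (hsub : ∀ A B : Finset V, σ (A ∪ B) + σ (A ∩ B) ≤ σ A + σ B)
    (X : Finset V) :
    ∀ T : Finset V, Disjoint T X →
      σ X + ∑ j ∈ T, (σ Finset.univ - σ (Finset.univ \ {j})) ≤ σ (X ∪ T) := by
  intro T
  induction T using Finset.induction_on with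
  | empty => simp
  | @insert a T ha ih =>
    intro hd
    have hd' : Disjoint T X := (Finset.disjoint_insert_left.mp hd).2
    have haX : a ∉ X := (Finset.disjoint_insert_left.mp hd).1
    have haXT : a ∉ X ∪ T := by simp [haX, ha]
    have hsubuniv : X ∪ T ⊆ Finset.univ \ {a} := by
      intro x hx
      simp only [Finset.mem_sdiff, Finset.mem_univ, Finset.mem_singleton, true_and]
      rintro rfl; exact haXT hx
    have hna : a ∉ Finset.univ \ {a} := by simp
    have h2 := key_marg σ hsub hsubuniv hna
    have huniv : insert a (Finset.univ \ {a}) = (Finset.univ : Finset V) := by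
      ext x; by_cases hx : x = a <;> simp [hx]
    rw [huniv] at h2
    have h1 : X ∪ insert a T = insert a (X ∪ T) := by
      ext x; simp [or_comm, or_left_comm]
    rw [h1, Finset.sum_insert ha]
    have := ih hd'
    linarith

/-- Validity of the submodular optimality inequality for general (possibly
nonmonotone) submodular set functions: for all `S, X ⊆ V`,
`σ(X) ≤ σ(S) − ∑_{j ∈ S \ X} ρ_j(V \ {j}) + ∑_{j ∈ X \ S} ρ_j(S)`,
where `ρ_j(S) = σ(S ∪ {j}) - σ(S)` and `ρ_j(V \ {j}) = σ(V) − σ(V \ {j})`. -/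
theorem submodular_cut_nonmonotone {V : Type*} [Fintype V] [DecidableEq V]
    (σ : Finset V → ℝ)
    (hsub : ∀ A B : Finset V, σ (A ∪ B) + σ (A ∩ B) ≤ σ A + σ B)
    (S X : Finset V) :
    σ X ≤ σ S - ∑ j ∈ S \ X, (σ Finset.univ - σ (Finset.univ \ {j}))
        + ∑ j ∈ X \ S, (σ (insert j S) - σ S) := by
  have hA := lemA σ hsub S (X \ S) Finset.sdiff_disjoint
  have hB := lemB σ hsub X (S \ X) Finset.sdiff_disjoint
  rw [Finset.union_sdiff_self_eq_union] at hA
  rw [Finset.union_sdiff_self_eq_union, Finset.union_comm] at hB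
  linarith
end

section
/- Let σ : 2^V → ℝ be a submodular and nondecreasing set function on a finite set V and let k be a natural number with k ≤ |V|. Call a pair (θ, X) with θ ∈ ℝ and X ⊆ V feasible if |X| ≤ k and θ ≤ σ(S) + Σ_{j ∈ X \ S} ρ_j(S) for every S ⊆ V. Then a set X̄ ⊆ V with |X̄| ≤ k satisfies σ(X̄) = max{σ(S) : S ⊆ V, |S| ≤ k} if and only if (σ(X̄), X̄) is feasible and σ(X̄) ≥ θ for every feasible pair (θ, X). -/
lemma submodular_key {V : Type*} [DecidableEq V]
    (σ : Finset V → ℝ)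
    (hsub : ∀ A B : Finset V, σ (A ∪ B) + σ (A ∩ B) ≤ σ A + σ B)
    (T B : Finset V) :
    σ (B ∪ T) ≤ σ B + ∑ j ∈ T \ B, (σ (insert j B) - σ B) := by
  induction T using Finset.induction_on with
  | empty => simp
  | @insert a T ha ih =>
    by_cases hab : a ∈ B
    · have h1 : B ∪ insert a T = B ∪ T := by
        ext x; simp only [Finset.mem_union, Finset.mem_insert]
        constructor
        · rintro (h | rfl | h) <;> simp_all
        · rintro (h | h) <;> simp_all
      have h2 : insert a T \ B = T \ B := by
        ext x; simp only [Finset.mem_sdiff, Finset.mem_insert]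
        constructor
        · rintro ⟨rfl | h, hx⟩ <;> simp_all
        · rintro ⟨h, hx⟩; exact ⟨Or.inr h, hx⟩
      rw [h1, h2]; exact ih
    · have h1 : B ∪ insert a T = insert a (B ∪ T) := by
        ext x; simp [Finset.mem_union, Finset.mem_insert]
      have h2 : insert a T \ B = insert a (T \ B) := by
        ext x; simp only [Finset.mem_sdiff, Finset.mem_insert]
        constructor
        · rintro ⟨rfl | h, hx⟩ <;> simp_all
        · rintro (rfl | ⟨h, hx⟩) <;> simp_all
      have haT : a ∉ T \ B := fun h => ha (Finset.mem_sdiff.mp h).1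
      rw [h1, h2, Finset.sum_insert haT]
      have hkey := hsub (B ∪ T) (insert a B)
      have hu : (B ∪ T) ∪ insert a B = insert a (B ∪ T) := by
        ext x; simp [Finset.mem_union, Finset.mem_insert]; tauto
      have hi : (B ∪ T) ∩ insert a B = B := by
        ext x
        simp only [Finset.mem_inter, Finset.mem_union, Finset.mem_insert]
        constructor
        · rintro ⟨h | h, rfl | hb⟩ <;> simp_all
        · intro h; exact ⟨Or.inl h, Or.inr h⟩
      rw [hu, hi] at hkey
      linarith

/-- Nemhauser–Wolsey equivalence (nondecreasing case): `X̄` with `|X̄| ≤ k`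
maximizes a nondecreasing submodular `σ` over sets of cardinality at most `k`
iff `(σ(X̄), X̄)` is feasible for the full master problem (satisfies all
submodular inequalities and the cardinality constraint) and `σ(X̄)` bounds the
objective `θ` of every feasible pair `(θ, X)`. -/
theorem submodular_master_equiv_nondecreasing {V : Type*} [Fintype V] [DecidableEq V]
    (σ : Finset V → ℝ)
    (hsub : ∀ A B : Finset V, σ (A ∪ B) + σ (A ∩ B) ≤ σ A + σ B)
    (hmono : ∀ A B : Finset V, A ⊆ B → σ A ≤ σ B)
    (k : ℕ) (hk : k ≤ Fintype.card V)
    (Xbar : Finset V) (hXbar : Xbar.card ≤ k) :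
    (∀ S : Finset V, S.card ≤ k → σ S ≤ σ Xbar) ↔
      ((Xbar.card ≤ k ∧
          ∀ S : Finset V, σ Xbar ≤ σ S + ∑ j ∈ Xbar \ S, (σ (insert j S) - σ S)) ∧
        ∀ (θ : ℝ) (X : Finset V),
          (X.card ≤ k ∧
            ∀ S : Finset V, θ ≤ σ S + ∑ j ∈ X \ S, (σ (insert j S) - σ S)) →
          θ ≤ σ Xbar) := by
  have feas : ∀ A B : Finset V, σ A ≤ σ B + ∑ j ∈ A \ B, (σ (insert j B) - σ B) := by
    intro A B
    calc σ A ≤ σ (B ∪ A) := hmono _ _ Finset.subset_union_right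
    _ ≤ _ := submodular_key σ hsub A B
  constructor
  · intro hopt
    refine ⟨⟨hXbar, fun S => feas Xbar S⟩, ?_⟩
    rintro θ X ⟨hXk, hX⟩
    have := hX X
    simp only [Finset.sdiff_self, Finset.sum_empty, add_zero] at this
    exact this.trans (hopt X hXk)
  · rintro ⟨_, hbound⟩ S hS
    exact hbound (σ S) S ⟨hS, fun T => feas S T⟩
end

section
/- Let σ : 2^V → ℝ be a submodular (possibly nonmonotone) set function on a finite set V and let k be a natural number with k ≤ |V|. Call a pair (θ, X) with θ ∈ ℝ and X ⊆ V feasible if |X| ≤ k and θ ≤ σ(S) − Σ_{j ∈ S \ X} (σ(V) − σ(V \ {j})) + Σ_{j ∈ X \ S} ρ_j(S) for every S ⊆ V. Then a set X̄ ⊆ V with |X̄| ≤ k satisfies σ(X̄) = max{σ(S) : S ⊆ V, |S| ≤ k} if and only if (σ(X̄), X̄) is feasible and σ(X̄) ≥ θ for every feasible pair (θ, X). -/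
section Aux

variable {V : Type*} [Fintype V] [DecidableEq V] (σ : Finset V → ℝ)
variable (hsub : ∀ A B : Finset V, σ (A ∪ B) + σ (A ∩ B) ≤ σ A + σ B)
include hsub

lemma nw_step_add {S A : Finset V} {j : V} (hSA : S ⊆ A) (hj : j ∉ A) :
    σ (insert j A) ≤ σ A + (σ (insert j S) - σ S) := by
  have h := hsub (insert j S) A
  have h1 : insert j S ∪ A = insert j A := by
    ext x; simp only [Finset.mem_union, Finset.mem_insert]
    constructor
    · rintro (⟨h|h⟩|h) <;> [exact Or.inl h; exact Or.inr (hSA h); exact Or.inr h]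
    · tauto
  have h2 : insert j S ∩ A = S := by
    ext x; simp only [Finset.mem_inter, Finset.mem_insert]
    constructor
    · rintro ⟨h|h, hx⟩
      · exact absurd (h ▸ hx) hj
      · exact h
    · exact fun hx => ⟨Or.inr hx, hSA hx⟩
  rw [h1, h2] at h
  linarith

lemma nw_step_rem {B : Finset V} {a : V} (ha : a ∈ B) :
    σ (B \ {a}) ≤ σ B - (σ Finset.univ - σ (Finset.univ \ {a})) := by
  have h := hsub B (Finset.univ \ {a})
  have h1 : B ∪ (Finset.univ \ {a}) = Finset.univ := by
    ext x
    simp only [Finset.mem_union, Finset.mem_sdiff, Finset.mem_univ, Finset.mem_singleton,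
      true_and, iff_true]
    by_cases hx : x = a
    · exact Or.inl (hx ▸ ha)
    · exact Or.inr hx
  have h2 : B ∩ (Finset.univ \ {a}) = B \ {a} := by
    ext x
    simp [Finset.mem_inter, Finset.mem_sdiff]
  rw [h1, h2] at h
  linarith

lemma nw_claimA (T : Finset V) : ∀ S : Finset V, Disjoint T S →
    σ (S ∪ T) ≤ σ S + ∑ j ∈ T, (σ (insert j S) - σ S) := by
  classical
  induction T using Finset.induction_on with
  | empty => intro S _; simp
  | @insert a T ha ih =>
    intro S hdisj
    have haS : a ∉ S := by
      have := Finset.disjoint_left.mp hdisj (Finset.mem_insert_self a T)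
      exact this
    have hTd : Disjoint T S := by
      exact Finset.disjoint_of_subset_left (Finset.subset_insert a T) hdisj
    have hU : S ∪ insert a T = insert a (S ∪ T) := by
      ext x; simp only [Finset.mem_union, Finset.mem_insert]; tauto
    have haST : a ∉ S ∪ T := by
      simp only [Finset.mem_union]
      push_neg
      exact ⟨haS, ha⟩
    have hstep := nw_step_add σ hsub (Finset.subset_union_left (s₁ := S) (s₂ := T)) haST
    have hih := ih S hTd
    rw [hU, Finset.sum_insert ha]
    linarith

lemma nw_claimB (T : Finset V) : ∀ A : Finset V, T ⊆ A →
    σ (A \ T) ≤ σ A - ∑ j ∈ T, (σ Finset.univ - σ (Finset.univ \ {j})) := by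
  classical
  induction T using Finset.induction_on with
  | empty => intro A _; simp
  | @insert a T ha ih =>
    intro A hTA
    have haA : a ∈ A := hTA (Finset.mem_insert_self a T)
    have hTA' : T ⊆ A := (Finset.subset_insert a T).trans hTA
    have hE : A \ insert a T = (A \ T) \ {a} := by
      ext x
      simp only [Finset.mem_sdiff, Finset.mem_insert, Finset.mem_singleton]
      tauto
    have haAT : a ∈ A \ T := Finset.mem_sdiff.mpr ⟨haA, ha⟩
    have hstep := nw_step_rem σ hsub haAT
    have hih := ih A hTA'
    rw [hE, Finset.sum_insert ha]
    linarith

lemma nw_key (X S : Finset V) :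
    σ X ≤ σ S - ∑ j ∈ S \ X, (σ Finset.univ - σ (Finset.univ \ {j}))
      + ∑ j ∈ X \ S, (σ (insert j S) - σ S) := by
  classical
  have hdisj : Disjoint (X \ S) S := Finset.sdiff_disjoint
  have hA := nw_claimA σ hsub (X \ S) S hdisj
  have hsub1 : S \ X ⊆ S ∪ (X \ S) := by
    intro x hx
    exact Finset.mem_union_left _ (Finset.mem_sdiff.mp hx).1
  have hB := nw_claimB σ hsub (S \ X) (S ∪ (X \ S)) hsub1
  have hX : (S ∪ (X \ S)) \ (S \ X) = X := by
    ext x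
    simp only [Finset.mem_sdiff, Finset.mem_union]
    tauto
  rw [hX] at hB
  linarith

end Aux

/-- Nemhauser–Wolsey equivalence (nonmonotone case): `X̄` with `|X̄| ≤ k`
maximizes a (possibly nonmonotone) submodular `σ` over sets of cardinality at
most `k` iff `(σ(X̄), X̄)` is feasible for the full master problem with the
nonmonotone submodular inequalities and `σ(X̄)` bounds the objective `θ` of
every feasible pair `(θ, X)`. -/
theorem submodular_master_equiv_nonmonotone {V : Type*} [Fintype V] [DecidableEq V]
    (σ : Finset V → ℝ)
    (hsub : ∀ A B : Finset V, σ (A ∪ B) + σ (A ∩ B) ≤ σ A + σ B)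
    (k : ℕ) (hk : k ≤ Fintype.card V)
    (Xbar : Finset V) (hXbar : Xbar.card ≤ k) :
    (∀ S : Finset V, S.card ≤ k → σ S ≤ σ Xbar) ↔
      ((Xbar.card ≤ k ∧
          ∀ S : Finset V, σ Xbar ≤ σ S
            - ∑ j ∈ S \ Xbar, (σ Finset.univ - σ (Finset.univ \ {j}))
            + ∑ j ∈ Xbar \ S, (σ (insert j S) - σ S)) ∧
        ∀ (θ : ℝ) (X : Finset V),
          (X.card ≤ k ∧
            ∀ S : Finset V, θ ≤ σ S
              - ∑ j ∈ S \ X, (σ Finset.univ - σ (Finset.univ \ {j}))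
              + ∑ j ∈ X \ S, (σ (insert j S) - σ S)) →
          θ ≤ σ Xbar) := by
  constructor
  · intro hopt
    refine ⟨⟨hXbar, fun S => nw_key σ hsub Xbar S⟩, ?_⟩
    rintro θ X ⟨hXcard, hfeas⟩
    have h := hfeas X
    simp only [Finset.sdiff_self, Finset.sum_empty] at h
    have : θ ≤ σ X := by linarith
    exact this.trans (hopt X hXcard)
  · rintro ⟨_, hdom⟩ S hS
    exact hdom (σ S) S ⟨hS, fun T => nw_key σ hsub S T⟩
end

section
/- For every S ⊆ V and every X ⊆ V, σ(X) ≤ σ(S) + Σ_{j ∈ X ∩ R̄(S)} r_j(S). (Validity of the submodular optimality cut θ ≤ σ(S) + Σ_{j ∈ R̄(S)} r_j(S) x_j for the influence maximization master problem.) -/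
open scoped Classical in
/-- `Rhat A S` is the set of nodes of a finite directed graph with arc
relation `A` that are reachable from the seed set `S` (that is, nodes `v`
such that `v ∈ S` or there is a directed path from some node of `S` to `v`).
The influence function is `σ(S) = (Rhat A S).card`. -/
noncomputable def Rhat {V : Type*} [Fintype V] (A : V → V → Prop)
    (S : Finset V) : Finset V :=
  Finset.univ.filter fun v => ∃ s ∈ S, Relation.ReflTransGen A s v

/-- Validity of the submodular optimality cut for the influence maximization
master problem: for all `S, X ⊆ V`,
`σ(X) ≤ σ(S) + ∑_{j ∈ X ∩ R̄(S)} r_j(S)`, where `R̄(S) = V \ R̂(S)` and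
`r_j(S) = |R̂({j}) \ R̂(S)|`. -/
theorem influence_submodular_cut_valid {V : Type*} [Fintype V] [DecidableEq V]
    (A : V → V → Prop) (S X : Finset V) :
    (Rhat A X).card ≤ (Rhat A S).card +
      ∑ j ∈ X ∩ (Finset.univ \ Rhat A S), (Rhat A {j} \ Rhat A S).card := by
  classical
  set T := X ∩ (Finset.univ \ Rhat A S) with hT
  have hsub : Rhat A X ⊆ Rhat A S ∪ T.biUnion (fun j => Rhat A {j} \ Rhat A S) := by
    intro v hv
    simp only [Rhat, Finset.mem_filter, Finset.mem_univ, true_and] at hv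
    obtain ⟨s, hsX, hpath⟩ := hv
    by_cases hs : s ∈ Rhat A S
    · refine Finset.mem_union_left _ ?_
      simp only [Rhat, Finset.mem_filter, Finset.mem_univ, true_and] at hs ⊢
      obtain ⟨t, htS, ht⟩ := hs
      exact ⟨t, htS, ht.trans hpath⟩
    · by_cases hv' : v ∈ Rhat A S
      · exact Finset.mem_union_left _ hv'
      · refine Finset.mem_union_right _ ?_
        refine Finset.mem_biUnion.2 ⟨s, ?_, ?_⟩
        · simp [hT, hsX, hs]
        · refine Finset.mem_sdiff.2 ⟨?_, hv'⟩
          simp only [Rhat, Finset.mem_filter, Finset.mem_univ, true_and]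
          exact ⟨s, Finset.mem_singleton_self s, hpath⟩
  calc (Rhat A X).card
      ≤ (Rhat A S ∪ T.biUnion (fun j => Rhat A {j} \ Rhat A S)).card :=
        Finset.card_le_card hsub
    _ ≤ (Rhat A S).card + (T.biUnion (fun j => Rhat A {j} \ Rhat A S)).card :=
        Finset.card_union_le _ _
    _ ≤ (Rhat A S).card + ∑ j ∈ T, (Rhat A {j} \ Rhat A S).card := by
        exact Nat.add_le_add_left (Finset.card_biUnion_le) _
end

section
/- Let S ⊆ V and let i ∈ S be a node with no incoming arcs in A (in-degree 0) such that every node reachable from i lies in S, i.e., R̂({i}) ⊆ S. Then: (a) σ(S \ {i}) = σ(S) − 1; (b) R̄(S \ {i}) = R̄(S) ∪ {i}; and (c) r_j(S \ {i}) = r_j(S) for every j ∈ R̄(S), and r_i(S \ {i}) = 1. (This is the key step showing that the submodular cut for S containing a root node is dominated by the cut for S \ {i} together with x_i ≤ 1, so such a cut is not facet-defining.) -/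
open scoped Classical in
lemma mem_Rhat_iff {V : Type*} [Fintype V] (A : V → V → Prop)
    (S : Finset V) (v : V) :
    v ∈ Rhat A S ↔ ∃ s ∈ S, Relation.ReflTransGen A s v := by
  simp [Rhat]

lemma path_to_root {V : Type*} (A : V → V → Prop) (i : V)
    (hroot : ∀ u : V, ¬ A u i) {s : V} (h : Relation.ReflTransGen A s i) :
    s = i := by
  rcases h.cases_tail with h | ⟨c, _, hc⟩
  · exact h.symm
  · exact absurd hc (hroot c)

/-- Removing a root node `i ∈ S` (a node of in-degree zero all of whose
reachable nodes lie in `S`) from the seed set: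
(a) `σ(S \ {i}) = σ(S) − 1`;
(b) `R̄(S \ {i}) = R̄(S) ∪ {i}`;
(c) `r_j(S \ {i}) = r_j(S)` for every `j ∈ R̄(S)`, and `r_i(S \ {i}) = 1`.
This is the key step showing a submodular cut whose seed set contains a root
node is dominated, hence not facet-defining. -/
theorem influence_cut_remove_root {V : Type*} [Fintype V] [DecidableEq V]
    (A : V → V → Prop) (S : Finset V) (i : V)
    (hiS : i ∈ S)
    (hroot : ∀ u : V, ¬ A u i)
    (hdesc : Rhat A {i} ⊆ S) :
    (Rhat A S).card = (Rhat A (S.erase i)).card + 1 ∧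
    Finset.univ \ Rhat A (S.erase i) = insert i (Finset.univ \ Rhat A S) ∧
    (∀ j ∈ Finset.univ \ Rhat A S,
      (Rhat A {j} \ Rhat A (S.erase i)).card = (Rhat A {j} \ Rhat A S).card) ∧
    (Rhat A {i} \ Rhat A (S.erase i)).card = 1 := by
  have hkey : Rhat A (S.erase i) = (Rhat A S).erase i := by
    ext v
    rw [Finset.mem_erase, mem_Rhat_iff, mem_Rhat_iff]
    constructor
    · rintro ⟨s, hs, hpath⟩
      rw [Finset.mem_erase] at hs
      refine ⟨fun hvi => ?_, s, hs.2, hpath⟩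
      exact hs.1 (path_to_root A i hroot (hvi ▸ hpath))
    · rintro ⟨hvi, s, hs, hpath⟩
      by_cases hsi : s = i
      · subst hsi
        have hvS : v ∈ S := hdesc (by
          rw [mem_Rhat_iff]; exact ⟨s, Finset.mem_singleton_self s, hpath⟩)
        exact ⟨v, Finset.mem_erase.2 ⟨hvi, hvS⟩, Relation.ReflTransGen.refl⟩
      · exact ⟨s, Finset.mem_erase.2 ⟨hsi, hs⟩, hpath⟩
  have hiR : i ∈ Rhat A S := by
    rw [mem_Rhat_iff]; exact ⟨i, hiS, Relation.ReflTransGen.refl⟩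
  refine ⟨?_, ?_, ?_, ?_⟩
  · have hpos : 0 < (Rhat A S).card := Finset.card_pos.2 ⟨i, hiR⟩
    rw [hkey, Finset.card_erase_of_mem hiR]
    omega
  · rw [hkey]
    ext v
    by_cases hvi : v = i <;>
      simp [Finset.mem_sdiff, Finset.mem_erase, hvi, hiR]
  · intro j hj
    rw [Finset.mem_sdiff, mem_Rhat_iff] at hj
    have hij : i ∉ Rhat A {j} := by
      rw [mem_Rhat_iff]
      rintro ⟨s, hs, hpath⟩
      rw [Finset.mem_singleton] at hs
      subst hs
      exact hj.2 ⟨i, hiS, (path_to_root A i hroot hpath) ▸ Relation.ReflTransGen.refl⟩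
    rw [hkey]
    congr 1
    ext v
    simp only [Finset.mem_sdiff, Finset.mem_erase]
    constructor
    · rintro ⟨hv, h⟩
      exact ⟨hv, fun hvS => h ⟨fun hvi => hij (hvi ▸ hv), hvS⟩⟩
    · rintro ⟨hv, h⟩
      exact ⟨hv, fun h2 => h h2.2⟩
  · rw [hkey]
    have : Rhat A {i} \ (Rhat A S).erase i = {i} := by
      ext v
      simp only [Finset.mem_sdiff, Finset.mem_erase, Finset.mem_singleton]
      constructor
      · rintro ⟨hv, h⟩
        by_contra hvi
        exact h ⟨hvi, by rw [mem_Rhat_iff]; exact ⟨v, hdesc hv, Relation.ReflTransGen.refl⟩⟩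
      · rintro rfl
        exact ⟨by rw [mem_Rhat_iff]; exact ⟨v, Finset.mem_singleton_self v, Relation.ReflTransGen.refl⟩,
          fun h => h.1 rfl⟩
    rw [this, Finset.card_singleton]
end

section
/- Consider the |V| + 1 points of ℝ × ℝ^V given by p_0 = (0, 0) and p_j = (σ({j}), e_j) for each j ∈ V, where e_j is the j-th standard unit vector. Then: (a) these points are affinely independent; (b) each point satisfies θ ≤ σ(S) + Σ_{j' ∈ R̄(S)} r_{j'}(S) x_{j'} for every S ⊆ V (i.e., each point lies in the polyhedron S_ω defined by all submodular inequalities); and (c) each point satisfies the S = ∅ submodular inequality θ ≤ Σ_{j' ∈ V} σ({j'}) x_{j'} with equality. (Hence the S = ∅ submodular inequality is facet-defining for conv(S_ω) for any k ≥ 1.) -/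
open scoped Classical in
lemma Rhat_subset_of_mem {V : Type*} [Fintype V] (A : V → V → Prop)
    (S : Finset V) {j : V} (hj : j ∈ Rhat A S) :
    Rhat A {j} ⊆ Rhat A S := by
  intro v hv
  simp only [Rhat, Finset.mem_filter, Finset.mem_univ, true_and,
    Finset.mem_singleton] at hv hj ⊢
  obtain ⟨s, hsj, hpath⟩ := hv
  obtain ⟨t, htS, hpath'⟩ := hj
  exact ⟨t, htS, hpath'.trans (hsj ▸ hpath)⟩

/-- The `|V| + 1` points `p_0 = (0, 0)` and `p_j = (σ({j}), e_j)`, `j ∈ V`, of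
`ℝ × ℝ^V` are (a) affinely independent, (b) satisfy every submodular
inequality `θ ≤ σ(S) + ∑_{j' ∈ R̄(S)} r_{j'}(S) x_{j'}`, and (c) satisfy the
`S = ∅` submodular inequality `θ ≤ ∑_{j' ∈ V} σ({j'}) x_{j'}` with equality.
Hence the `S = ∅` submodular inequality is facet-defining. -/
theorem emptySetCut_facet_points {V : Type*} [Fintype V] [DecidableEq V]
    (A : V → V → Prop) :
    let pts : Option V → ℝ × (V → ℝ) := fun o =>
      match o with
      | none => ((0 : ℝ), (0 : V → ℝ))
      | some j => (((Rhat A {j}).card : ℝ), fun i => if i = j then (1 : ℝ) else 0)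
    AffineIndependent ℝ pts ∧
    (∀ (o : Option V) (S : Finset V),
      (pts o).1 ≤ ((Rhat A S).card : ℝ) +
        ∑ j' ∈ Finset.univ \ Rhat A S,
          ((Rhat A {j'} \ Rhat A S).card : ℝ) * (pts o).2 j') ∧
    (∀ o : Option V,
      (pts o).1 = ∑ j' : V, ((Rhat A {j'}).card : ℝ) * (pts o).2 j') := by
  intro pts
  refine ⟨?_, ?_, ?_⟩
  · rw [affineIndependent_iff_of_fintype]
    intro w hw h0 o
    rw [Finset.weightedVSub_eq_linear_combination _ hw] at h0
    have key : ∀ i : V, w (some i) = 0 := by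
      intro i
      have h2 := congrArg (fun p => p.2 i) h0
      simp only [Prod.snd_sum, Finset.sum_apply, Prod.snd_zero, Pi.zero_apply] at h2
      have : ∑ o : Option V, (w o • pts o).2 i = w (some i) := by
        rw [Fintype.sum_option]
        simp only [pts, Prod.smul_snd, Pi.smul_apply, smul_eq_mul, mul_ite,
          mul_one, mul_zero, Pi.zero_apply]
        simp [Finset.sum_ite_eq]
      rw [this] at h2
      simpa using h2
    match o with
    | some i => exact key i
    | none =>
      rw [Fintype.sum_option] at hw
      simpa [key] using hw
  · intro o S
    match o with
    | none =>
      simp only [pts]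
      have h1 : (0 : ℝ) ≤ ((Rhat A S).card : ℝ) := by positivity
      have h2 : (0 : ℝ) ≤ ∑ j' ∈ Finset.univ \ Rhat A S,
          ((Rhat A {j'} \ Rhat A S).card : ℝ) * (0 : V → ℝ) j' := by
        simp
      linarith
    | some j =>
      simp only [pts]
      have hsum : ∑ j' ∈ Finset.univ \ Rhat A S,
          ((Rhat A {j'} \ Rhat A S).card : ℝ) * (if j' = j then (1:ℝ) else 0)
          = if j ∈ Finset.univ \ Rhat A S
            then ((Rhat A {j} \ Rhat A S).card : ℝ) else 0 := by
        rw [← Finset.sum_ite_eq' (Finset.univ \ Rhat A S) j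
          (fun j' => ((Rhat A {j'} \ Rhat A S).card : ℝ))]
        refine Finset.sum_congr rfl fun x _ => ?_
        by_cases h : x = j <;> simp [h]
      rw [hsum]
      by_cases hj : j ∈ Rhat A S
      · have hsub := Rhat_subset_of_mem A S hj
        have := Finset.card_le_card hsub
        rw [if_neg (by simp [hj]), add_zero]
        exact_mod_cast this
      · simp only [Finset.mem_sdiff, Finset.mem_univ, hj, not_false_iff,
          and_true, if_true]
        have hcard : ((Rhat A {j}) ∩ (Rhat A S)).card
            + ((Rhat A {j}) \ (Rhat A S)).card = (Rhat A {j}).card :=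
          Finset.card_inter_add_card_sdiff _ _
        have hle : ((Rhat A {j}) ∩ (Rhat A S)).card ≤ (Rhat A S).card :=
          Finset.card_le_card (Finset.inter_subset_right)
        have : (Rhat A {j}).card ≤ (Rhat A S).card
            + ((Rhat A {j}) \ (Rhat A S)).card := by omega
        exact_mod_cast this
  · intro o
    match o with
    | none => simp [pts]
    | some j =>
      simp only [pts, mul_ite, mul_one, mul_zero]
      rw [Finset.sum_ite_eq' Finset.univ j
        (fun j' => ((Rhat A {j'}).card : ℝ))]
      simp
end

section
/- For every S ⊆ V and every j ∈ R̄(S), r_j(S) ≤ n − σ(S). Consequently, for every X ⊆ V, σ(S) + Σ_{j ∈ X ∩ R̄(S)} r_j(S) ≤ σ(S) + (n − σ(S)) · |X ∩ R̄(S)|, i.e., the submodular optimality cuts dominate the strengthened integer L-shaped optimality cuts. -/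
/-- For every `S ⊆ V` and every `j ∈ R̄(S)`, `r_j(S) ≤ n − σ(S)`; hence for
every `X ⊆ V`,
`σ(S) + ∑_{j ∈ X ∩ R̄(S)} r_j(S) ≤ σ(S) + (n − σ(S)) · |X ∩ R̄(S)|`,
i.e. the submodular optimality cuts dominate the strengthened integer
L-shaped optimality cuts. -/
theorem submodular_cut_dominates_Lshaped {V : Type*} [Fintype V] [DecidableEq V]
    (A : V → V → Prop) (S : Finset V) :
    (∀ j ∈ Finset.univ \ Rhat A S,
      (Rhat A {j} \ Rhat A S).card ≤ Fintype.card V - (Rhat A S).card) ∧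
    (∀ X : Finset V,
      (Rhat A S).card +
          ∑ j ∈ X ∩ (Finset.univ \ Rhat A S), (Rhat A {j} \ Rhat A S).card ≤
        (Rhat A S).card +
          (Fintype.card V - (Rhat A S).card) *
            (X ∩ (Finset.univ \ Rhat A S)).card) := by
  have key : ∀ j : V, (Rhat A {j} \ Rhat A S).card ≤ Fintype.card V - (Rhat A S).card := by
    intro j
    have hsub : Rhat A {j} \ Rhat A S ⊆ Finset.univ \ Rhat A S := by
      intro x hx
      simp only [Finset.mem_sdiff] at hx ⊢
      exact ⟨Finset.mem_univ x, hx.2⟩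
    calc (Rhat A {j} \ Rhat A S).card ≤ (Finset.univ \ Rhat A S).card :=
          Finset.card_le_card hsub
      _ = Fintype.card V - (Rhat A S).card := by
          rw [Finset.card_sdiff_of_subset (Finset.subset_univ _), Finset.card_univ]
  refine ⟨fun j _ => key j, fun X => ?_⟩
  gcongr
  rw [mul_comm]
  calc ∑ j ∈ X ∩ (Finset.univ \ Rhat A S), (Rhat A {j} \ Rhat A S).card
      ≤ ∑ _j ∈ X ∩ (Finset.univ \ Rhat A S), (Fintype.card V - (Rhat A S).card) :=
        Finset.sum_le_sum fun j _ => key j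
    _ = (X ∩ (Finset.univ \ Rhat A S)).card * (Fintype.card V - (Rhat A S).card) := by
        rw [Finset.sum_const, smul_eq_mul]
end

section
/- Let X̄ ⊆ V. If X ⊆ V satisfies X ∩ R̄(X̄) = ∅ (every node of X is reachable from X̄), then R̂(X) ⊆ R̂(X̄) and hence σ(X) ≤ σ(X̄). Consequently, for every X ⊆ V, σ(X) ≤ σ(X̄) + n · |X ∩ R̄(X̄)|, i.e., the combinatorial Benders optimality cut θ ≤ σ(X̄) + Σ_{i ∈ R̄(X̄)} n x_i is valid. -/
/-- Validity of the combinatorial Benders optimality cut: if every node of `X`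
is reachable from `X̄` (i.e. `X ∩ R̄(X̄) = ∅`), then `R̂(X) ⊆ R̂(X̄)` and
`σ(X) ≤ σ(X̄)`; consequently, for every `X ⊆ V`,
`σ(X) ≤ σ(X̄) + n · |X ∩ R̄(X̄)|`. -/
theorem combinatorial_benders_cut_valid {V : Type*} [Fintype V] [DecidableEq V]
    (A : V → V → Prop) (Xbar : Finset V) :
    (∀ X : Finset V, X ∩ (Finset.univ \ Rhat A Xbar) = ∅ →
      Rhat A X ⊆ Rhat A Xbar ∧ (Rhat A X).card ≤ (Rhat A Xbar).card) ∧
    (∀ X : Finset V,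
      (Rhat A X).card ≤ (Rhat A Xbar).card +
        Fintype.card V * (X ∩ (Finset.univ \ Rhat A Xbar)).card) := by
  classical
  have key : ∀ X : Finset V, X ∩ (Finset.univ \ Rhat A Xbar) = ∅ →
      Rhat A X ⊆ Rhat A Xbar := by
    intro X hX v hv
    simp only [Rhat, Finset.mem_filter, Finset.mem_univ, true_and] at hv ⊢
    obtain ⟨s, hs, hsv⟩ := hv
    have hsR : s ∈ Rhat A Xbar := by
      by_contra h
      have : s ∈ X ∩ (Finset.univ \ Rhat A Xbar) := by
        simp [Finset.mem_inter, Finset.mem_sdiff, hs, h]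
      simp [hX] at this
    simp only [Rhat, Finset.mem_filter, Finset.mem_univ, true_and] at hsR
    obtain ⟨t, ht, hts⟩ := hsR
    exact ⟨t, ht, hts.trans hsv⟩
  constructor
  · intro X hX
    exact ⟨key X hX, Finset.card_le_card (key X hX)⟩
  · intro X
    by_cases h : X ∩ (Finset.univ \ Rhat A Xbar) = ∅
    · have := Finset.card_le_card (key X h)
      omega
    · have h1 : 1 ≤ (X ∩ (Finset.univ \ Rhat A Xbar)).card :=
        Finset.card_pos.mpr (Finset.nonempty_iff_ne_empty.mpr h)
      have h2 : (Rhat A X).card ≤ Fintype.card V := Finset.card_le_univ _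
      nlinarith
end

section
/- For every X̄ ⊆ V and every X ⊆ V, σ(X) ≤ σ(X̄) + (n − σ(X̄)) · |X ∩ R̄(X̄)|, i.e., the strengthened integer L-shaped optimality cut θ ≤ σ(X̄) + Σ_{i ∈ R̄(X̄)} (n − σ(X̄)) x_i is valid. -/
/-- Validity of the strengthened integer L-shaped optimality cut: for every
`X̄ ⊆ V` and every `X ⊆ V`,
`σ(X) ≤ σ(X̄) + (n − σ(X̄)) · |X ∩ R̄(X̄)|`. -/
theorem strengthened_Lshaped_cut_valid {V : Type*} [Fintype V] [DecidableEq V]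
    (A : V → V → Prop) (Xbar X : Finset V) :
    (Rhat A X).card ≤ (Rhat A Xbar).card +
      (Fintype.card V - (Rhat A Xbar).card) *
        (X ∩ (Finset.univ \ Rhat A Xbar)).card := by
  classical
  set T : Finset V := X ∩ (Finset.univ \ Rhat A Xbar) with hT
  have hsub : Rhat A X \ Rhat A Xbar ⊆
      T.biUnion (fun s => Rhat A {s} \ Rhat A Xbar) := by
    intro v hv
    rw [Finset.mem_sdiff] at hv
    obtain ⟨hvX, hvnB⟩ := hv
    rw [Rhat, Finset.mem_filter] at hvX
    obtain ⟨-, s, hsX, hpath⟩ := hvX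
    by_cases hsB : s ∈ Rhat A Xbar
    · exfalso
      apply hvnB
      rw [Rhat, Finset.mem_filter] at hsB ⊢
      obtain ⟨-, t, htX, hpt⟩ := hsB
      exact ⟨Finset.mem_univ _, t, htX, hpt.trans hpath⟩
    · refine Finset.mem_biUnion.2 ⟨s, ?_, ?_⟩
      · simp [hT, hsX, hsB]
      · rw [Finset.mem_sdiff]
        refine ⟨?_, hvnB⟩
        rw [Rhat, Finset.mem_filter]
        exact ⟨Finset.mem_univ _, s, Finset.mem_singleton_self s, hpath⟩
  have h1 : (Rhat A X).card ≤
      (Rhat A Xbar).card + (Rhat A X \ Rhat A Xbar).card := by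
    calc (Rhat A X).card ≤ (Rhat A X ∪ Rhat A Xbar).card :=
          Finset.card_le_card Finset.subset_union_left
      _ = (Rhat A Xbar ∪ (Rhat A X \ Rhat A Xbar)).card := by
          rw [Finset.union_comm, Finset.union_sdiff_self_eq_union,
            Finset.union_comm]
      _ ≤ _ := Finset.card_union_le _ _
  have h2 : (Rhat A X \ Rhat A Xbar).card ≤
      (Fintype.card V - (Rhat A Xbar).card) * T.card := by
    calc (Rhat A X \ Rhat A Xbar).card
        ≤ (T.biUnion (fun s => Rhat A {s} \ Rhat A Xbar)).card :=
          Finset.card_le_card hsub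
      _ ≤ ∑ s ∈ T, (Rhat A {s} \ Rhat A Xbar).card :=
          Finset.card_biUnion_le
      _ ≤ ∑ s ∈ T, (Fintype.card V - (Rhat A Xbar).card) := by
          refine Finset.sum_le_sum fun s _ => ?_
          have : Rhat A {s} \ Rhat A Xbar ⊆ Finset.univ \ Rhat A Xbar :=
            Finset.sdiff_subset_sdiff (Finset.subset_univ _) le_rfl
          calc (Rhat A {s} \ Rhat A Xbar).card
              ≤ (Finset.univ \ Rhat A Xbar).card := Finset.card_le_card this
            _ = Fintype.card V - (Rhat A Xbar).card := by
                rw [Finset.card_sdiff_of_subset (Finset.subset_univ _),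
                  Finset.card_univ]
      _ = (Fintype.card V - (Rhat A Xbar).card) * T.card := by
          rw [Finset.sum_const, smul_eq_mul, mul_comm]
  calc (Rhat A X).card ≤ (Rhat A Xbar).card + (Rhat A X \ Rhat A Xbar).card := h1
    _ ≤ _ := by exact Nat.add_le_add_left h2 _
end

section
/- Fix X̄ ⊆ V and form the augmented network with node set V ∪ {s, t} and arc set {(s,i) : i ∈ V} ∪ A ∪ {(i,t) : i ∈ V}. Consider nonnegative flows y on these arcs satisfying flow conservation at every node i ∈ V (inflow from s and from arcs of A into i equals outflow along arcs of A out of i plus flow to t), with capacities y_{si} ≤ n if i ∈ X̄ and y_{si} ≤ 0 if i ∉ X̄, y_{ij} ≤ n for every (i,j) ∈ A, and y_{it} ≤ 1 for every i ∈ V. Then the maximum of Σ_{i ∈ V} y_{si} over all such feasible flows is attained and equals σ(X̄) = |R̂(X̄)|, the number of nodes reachable from X̄ in G. -/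
open Finset in
lemma path_flow {V : Type*} [Fintype V] [DecidableEq V]
    (A : V → V → Prop) {c b : V} (h : Relation.ReflTransGen A c b) :
    ∃ T : Finset V, c ∈ T ∧ b ∈ T ∧ ∀ x ∈ T, ∃ f : V → V → ℝ,
      (∀ i j, 0 ≤ f i j) ∧ (∀ i j, f i j ≤ 1) ∧
      (∀ i j, ¬ A i j → f i j = 0) ∧
      (∀ i j, f i j ≠ 0 → i ∈ T ∧ j ∈ T) ∧
      (∀ i, (if i = x then (1:ℝ) else 0) + ∑ j, f j i
          = (∑ j, f i j) + if i = b then 1 else 0) := by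
  induction h using Relation.ReflTransGen.head_induction_on with
  | refl =>
    refine ⟨{b}, mem_singleton_self b, mem_singleton_self b, ?_⟩
    intro x hx
    rw [mem_singleton] at hx
    subst hx
    exact ⟨fun _ _ => 0, fun _ _ => le_refl 0, fun _ _ => zero_le_one,
      fun _ _ _ => rfl, fun i j h0 => absurd rfl h0, fun i => by simp⟩
  | @head a c' hac hcb IH =>
    obtain ⟨T, hcT, hbT, hT⟩ := IH
    by_cases haT : a ∈ T
    · exact ⟨T, haT, hbT, hT⟩
    · refine ⟨insert a T, mem_insert_self a T, mem_insert_of_mem hbT, ?_⟩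
      intro x hx
      rcases mem_insert.mp hx with rfl | hxT
      · obtain ⟨f, hf0, hf1, hfA, hfT, hcons⟩ := hT c' hcT
        have hfac : f x c' = 0 := by
          by_contra h0
          exact haT (hfT _ _ h0).1
        refine ⟨fun i j => f i j + if i = x ∧ j = c' then 1 else 0,
          ?_, ?_, ?_, ?_, ?_⟩
        · intro i j
          dsimp only
          have := hf0 i j
          split <;> linarith
        · intro i j
          dsimp only
          by_cases hij : i = x ∧ j = c'
          · obtain ⟨rfl, rfl⟩ := hij
            simp [hfac]
          · simp only [if_neg hij, add_zero]
            exact hf1 i j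
        · intro i j hnA
          dsimp only
          by_cases hij : i = x ∧ j = c'
          · obtain ⟨rfl, rfl⟩ := hij
            exact absurd hac hnA
          · simp [if_neg hij, hfA i j hnA]
        · intro i j h0
          dsimp only at h0
          by_cases hij : i = x ∧ j = c'
          · exact ⟨hij.1 ▸ mem_insert_self x T, hij.2 ▸ mem_insert_of_mem hcT⟩
          · simp only [if_neg hij, add_zero] at h0
            exact ⟨mem_insert_of_mem (hfT i j h0).1, mem_insert_of_mem (hfT i j h0).2⟩
        · intro i
          dsimp only
          have hold := hcons i
          have h1 : ∑ j, (f j i + if j = x ∧ i = c' then (1:ℝ) else 0)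
              = (∑ j, f j i) + if i = c' then 1 else 0 := by
            rw [Finset.sum_add_distrib]
            congr 1
            by_cases hic : i = c' <;> simp [hic]
          have h2 : ∑ j, (f i j + if i = x ∧ j = c' then (1:ℝ) else 0)
              = (∑ j, f i j) + if i = x then 1 else 0 := by
            rw [Finset.sum_add_distrib]
            congr 1
            by_cases hix : i = x <;> simp [hix]
          rw [h1, h2]
          linarith
      · obtain ⟨f, hf0, hf1, hfA, hfT, hcons⟩ := hT x hxT
        exact ⟨f, hf0, hf1, hfA,
          fun i j h0 => ⟨mem_insert_of_mem (hfT i j h0).1, mem_insert_of_mem (hfT i j h0).2⟩,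
          hcons⟩

/-- The influence spread `σ(X̄) = |R̂(X̄)|` equals the maximum flow in the
augmented network with source `s`, sink `t`, arcs `(s,i)` of capacity `n` for
`i ∈ X̄` (capacity `0` otherwise), arcs `(i,j) ∈ A` of capacity `n`, and arcs
`(i,t)` of capacity `1`; the maximum of `∑_i y_{si}` over feasible flows is
attained and equals `σ(X̄)`. -/
theorem influence_eq_maxflow {V : Type*} [Fintype V] [DecidableEq V]
    (A : V → V → Prop) (Xbar : Finset V) :
    IsGreatest
      {val : ℝ | ∃ (ys : V → ℝ) (ya : V → V → ℝ) (yt : V → ℝ),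
        (∀ i : V, 0 ≤ ys i) ∧
        (∀ i j : V, 0 ≤ ya i j) ∧
        (∀ i : V, 0 ≤ yt i) ∧
        (∀ i j : V, ¬ A i j → ya i j = 0) ∧
        (∀ i : V, ys i + ∑ j : V, ya j i = (∑ j : V, ya i j) + yt i) ∧
        (∀ i : V, ys i ≤ if i ∈ Xbar then (Fintype.card V : ℝ) else 0) ∧
        (∀ i j : V, A i j → ya i j ≤ (Fintype.card V : ℝ)) ∧
        (∀ i : V, yt i ≤ 1) ∧
        val = ∑ i : V, ys i}
      ((Rhat A Xbar).card : ℝ) := by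
  classical
  set R := Rhat A Xbar with hR
  have hmemR : ∀ v : V, v ∈ R ↔ ∃ s ∈ Xbar, Relation.ReflTransGen A s v := by
    intro v
    simp [hR, Rhat]
  have hXR : Xbar ⊆ R := fun v hv => (hmemR v).mpr ⟨v, hv, Relation.ReflTransGen.refl⟩
  have hclosed : ∀ j i : V, j ∈ R → A j i → i ∈ R := by
    intro j i hj hA
    obtain ⟨s, hs, hpath⟩ := (hmemR j).mp hj
    exact (hmemR i).mpr ⟨s, hs, hpath.tail hA⟩
  have hcardR : (R.card : ℝ) ≤ (Fintype.card V : ℝ) := by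
    exact_mod_cast Finset.card_le_univ R
  constructor
  · -- membership: construct the flow
    have key : ∀ v : V, ∃ (s : V) (f : V → V → ℝ), v ∈ R →
        s ∈ Xbar ∧ (∀ i j, 0 ≤ f i j) ∧ (∀ i j, f i j ≤ 1) ∧
        (∀ i j, ¬ A i j → f i j = 0) ∧
        (∀ i, (if i = s then (1:ℝ) else 0) + ∑ j, f j i
            = (∑ j, f i j) + if i = v then 1 else 0) := by
      intro v
      by_cases hv : v ∈ R
      · obtain ⟨s, hs, hpath⟩ := (hmemR v).mp hv
        obtain ⟨T, hsT, hvT, hT⟩ := path_flow A hpath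
        obtain ⟨f, hf0, hf1, hfA, _, hcons⟩ := hT s hsT
        exact ⟨s, f, fun _ => ⟨hs, hf0, hf1, hfA, hcons⟩⟩
      · exact ⟨v, fun _ _ => 0, fun hv' => absurd hv' hv⟩
    choose x F hF using key
    refine ⟨fun i => ∑ v ∈ R, if i = x v then (1:ℝ) else 0,
      fun i j => ∑ v ∈ R, F v i j,
      fun i => if i ∈ R then (1:ℝ) else 0,
      ?_, ?_, ?_, ?_, ?_, ?_, ?_, ?_, ?_⟩
    · intro i
      apply Finset.sum_nonneg
      intro v hv
      split <;> norm_num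
    · intro i j
      exact Finset.sum_nonneg fun v hv => (hF v hv).2.1 i j
    · intro i
      dsimp only
      split <;> norm_num
    · intro i j hnA
      exact Finset.sum_eq_zero fun v hv => (hF v hv).2.2.2.1 i j hnA
    · intro i
      dsimp only
      have h1 : ∑ j : V, ∑ v ∈ R, F v j i = ∑ v ∈ R, ∑ j : V, F v j i :=
        Finset.sum_comm
      have h2 : ∑ j : V, ∑ v ∈ R, F v i j = ∑ v ∈ R, ∑ j : V, F v i j :=
        Finset.sum_comm
      have h3 : ∑ v ∈ R, (if i = v then (1:ℝ) else 0) = if i ∈ R then 1 else 0 := by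
        simp [Finset.sum_ite_eq]
      rw [h1, h2, ← h3, ← Finset.sum_add_distrib, ← Finset.sum_add_distrib]
      exact Finset.sum_congr rfl fun v hv => (hF v hv).2.2.2.2 i
    · intro i
      by_cases hi : i ∈ Xbar
      · rw [if_pos hi]
        calc ∑ v ∈ R, (if i = x v then (1:ℝ) else 0)
            ≤ ∑ v ∈ R, 1 := by
              apply Finset.sum_le_sum
              intro v hv
              split <;> norm_num
          _ = (R.card : ℝ) := by simp
          _ ≤ _ := hcardR
      · rw [if_neg hi]
        apply le_of_eq
        apply Finset.sum_eq_zero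
        intro v hv
        rw [if_neg]
        intro hix
        exact hi (hix ▸ (hF v hv).1)
    · intro i j hA
      calc ∑ v ∈ R, F v i j ≤ ∑ v ∈ R, 1 :=
            Finset.sum_le_sum fun v hv => (hF v hv).2.2.1 i j
        _ = (R.card : ℝ) := by simp
        _ ≤ _ := hcardR
    · intro i
      dsimp only
      split <;> norm_num
    · rw [Finset.sum_comm]
      simp
  · -- upper bound
    rintro val ⟨ys, ya, yt, h0s, h0a, h0t, hA0, hcons, hcap_s, hcap_a, hcap_t, hvaleq⟩
    have hys0 : ∀ i : V, i ∉ R → ys i = 0 := by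
      intro i hi
      have h1 := hcap_s i
      rw [if_neg (fun hx => hi (hXR hx))] at h1
      linarith [h0s i]
    have hya0 : ∀ i j : V, i ∈ R → j ∉ R → ya i j = 0 := fun i j hi hj =>
      hA0 i j fun hA => hj (hclosed i j hi hA)
    set C : Finset V := Finset.univ \ R with hC
    -- sum conservation over C
    have hsplit : ∀ i : V, i ∈ C → ∑ j : V, ya j i = ∑ j ∈ C, ya j i := by
      intro i hi
      rw [← Finset.sum_sdiff (Finset.subset_univ R : R ⊆ Finset.univ)]
      have : ∑ j ∈ R, ya j i = 0 := Finset.sum_eq_zero fun j hj =>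
        hya0 j i hj (Finset.mem_sdiff.mp hi).2
      rw [← hC, this, add_zero]
    have hCsum : ∑ i ∈ C, yt i ≤ 0 := by
      have hs : ∑ i ∈ C, (ys i + ∑ j : V, ya j i)
          = ∑ i ∈ C, ((∑ j : V, ya i j) + yt i) :=
        Finset.sum_congr rfl fun i _ => hcons i
      rw [Finset.sum_add_distrib, Finset.sum_add_distrib] at hs
      have hs0 : ∑ i ∈ C, ys i = 0 := Finset.sum_eq_zero fun i hi =>
        hys0 i (Finset.mem_sdiff.mp hi).2
      have hin : ∑ i ∈ C, ∑ j : V, ya j i = ∑ i ∈ C, ∑ j ∈ C, ya j i :=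
        Finset.sum_congr rfl hsplit
      have hout : ∑ i ∈ C, ∑ j ∈ C, ya i j ≤ ∑ i ∈ C, ∑ j : V, ya i j := by
        apply Finset.sum_le_sum
        intro i _
        apply Finset.sum_le_sum_of_subset_of_nonneg (Finset.subset_univ C)
        intro j _ _
        exact h0a i j
      have hcomm : ∑ i ∈ C, ∑ j ∈ C, ya j i = ∑ i ∈ C, ∑ j ∈ C, ya i j :=
        Finset.sum_comm
      rw [hs0, hin, hcomm] at hs
      linarith
    have htot : ∑ i : V, ys i = ∑ i : V, yt i := by
      have hs : ∑ i : V, (ys i + ∑ j : V, ya j i)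
          = ∑ i : V, ((∑ j : V, ya i j) + yt i) :=
        Finset.sum_congr rfl fun i _ => hcons i
      rw [Finset.sum_add_distrib, Finset.sum_add_distrib] at hs
      have hcomm : ∑ i : V, ∑ j : V, ya j i = ∑ i : V, ∑ j : V, ya i j :=
        Finset.sum_comm
      rw [hcomm] at hs
      linarith
    have hRsum : ∑ i ∈ R, yt i ≤ (R.card : ℝ) := by
      calc ∑ i ∈ R, yt i ≤ ∑ i ∈ R, 1 := Finset.sum_le_sum fun i _ => hcap_t i
        _ = (R.card : ℝ) := by simp
    have hsplitV : ∑ i : V, yt i = ∑ i ∈ C, yt i + ∑ i ∈ R, yt i := by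
      rw [hC, Finset.sum_sdiff (Finset.subset_univ R)]
    rw [hvaleq, htot, hsplitV]
    linarith
end

section
/- Fix X̄ ⊆ V with characteristic vector x (x_i = 1 if i ∈ X̄, else 0), and define dual variables: u_i = 1 if i ∈ R̂(X̄) and u_i = 0 otherwise; v_{si} = 1 if i ∈ R̄(X̄) and v_{si} = 0 otherwise; v_{it} = 1 if i ∈ R̂(X̄) and v_{it} = 0 otherwise; and v_{ij} = 0 for every (i,j) ∈ A. Then: (a) there is no arc (i,j) ∈ A with i ∈ R̂(X̄) and j ∈ R̄(X̄); (b) this assignment satisfies the dual constraints u_i + v_{si} ≥ 1 for all i ∈ V, u_j − u_i + v_{ij} ≥ 0 for all (i,j) ∈ A, −u_i + v_{it} ≥ 0 for all i ∈ V, and all v-variables are nonnegative; and (c) the dual objective Σ_{i∈V} (n x_i v_{si} + v_{it}) + Σ_{(i,j)∈A} n v_{ij} equals σ(X̄) = |R̂(X̄)|. -/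
open scoped Classical

/-- The reachability-based dual solution for the max-flow formulation of the
influence spread: with `u_i = 1` iff `i ∈ R̂(X̄)`, `v_{si} = 1` iff
`i ∈ R̄(X̄)`, `v_{it} = 1` iff `i ∈ R̂(X̄)` and `v_{ij} = 0` on the arcs of
`A`, (a) no arc of `A` leaves `R̂(X̄)`, (b) the dual constraints hold, and
(c) the dual objective equals `σ(X̄) = |R̂(X̄)|`. -/
theorem influence_dual_solution {V : Type*} [Fintype V] [DecidableEq V]
    (A : V → V → Prop) (Xbar : Finset V) :
    (∀ i j : V, A i j → i ∈ Rhat A Xbar → j ∈ Rhat A Xbar) ∧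
    (let u : V → ℝ := fun i => if i ∈ Rhat A Xbar then 1 else 0
     let vs : V → ℝ := fun i => if i ∈ Rhat A Xbar then 0 else 1
     let vt : V → ℝ := fun i => if i ∈ Rhat A Xbar then 1 else 0
     let va : V → V → ℝ := fun _ _ => 0
     (∀ i : V, u i + vs i ≥ 1) ∧
     (∀ i j : V, A i j → u j - u i + va i j ≥ 0) ∧
     (∀ i : V, -u i + vt i ≥ 0) ∧
     (∀ i : V, 0 ≤ vs i) ∧
     (∀ i : V, 0 ≤ vt i) ∧
     (∀ i j : V, 0 ≤ va i j) ∧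
     ((∑ i : V, ((Fintype.card V : ℝ) *
          (if i ∈ Xbar then (1 : ℝ) else 0) * vs i + vt i)) +
        (∑ i : V, ∑ j : V,
          (if A i j then (Fintype.card V : ℝ) * va i j else 0)) =
       ((Rhat A Xbar).card : ℝ))) := by
  constructor
  · intro i j hij hi
    simp only [Rhat, Finset.mem_filter, Finset.mem_univ, true_and] at hi ⊢
    obtain ⟨s, hs, hpath⟩ := hi
    exact ⟨s, hs, hpath.tail hij⟩
  · intro u vs vt va
    refine ⟨?_, ?_, ?_, ?_, ?_, ?_, ?_⟩
    · intro i; simp only [u, vs]; split <;> norm_num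
    · intro i j hij; simp only [u, va]
      by_cases hi : i ∈ Rhat A Xbar
      · have hj : j ∈ Rhat A Xbar := by
          simp only [Rhat, Finset.mem_filter, Finset.mem_univ, true_and] at hi ⊢
          obtain ⟨s, hs, hpath⟩ := hi
          exact ⟨s, hs, hpath.tail hij⟩
        simp [hi, hj]
      · simp [hi]; split <;> norm_num
    · intro i; simp only [u, vt]; split <;> norm_num
    · intro i; simp only [vs]; split <;> norm_num
    · intro i; simp only [vt]; split <;> norm_num
    · intro i j; simp [va]
    · have hsub : Xbar ⊆ Rhat A Xbar := by
        intro x hx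
        simp only [Rhat, Finset.mem_filter, Finset.mem_univ, true_and]
        exact ⟨x, hx, Relation.ReflTransGen.refl⟩
      have h1 : ∀ i : V, (Fintype.card V : ℝ) *
          (if i ∈ Xbar then (1 : ℝ) else 0) * vs i + vt i =
          (if i ∈ Rhat A Xbar then (1 : ℝ) else 0) := by
        intro i
        simp only [vs, vt]
        by_cases hx : i ∈ Xbar
        · have := hsub hx; simp [hx, this]
        · by_cases hr : i ∈ Rhat A Xbar <;> simp [hx, hr]
      simp only [h1, va, mul_zero, Finset.sum_const_zero, add_zero,
        Finset.sum_ite_eq]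
      rw [Finset.sum_ite_mem, Finset.univ_inter, Finset.sum_const]
      simp
end
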